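/- For natural n and nonzero a, the deformed binomial power under rescaling satisfies (x ⊕_{au,av})_{as,a²t}^{(n)} = a^{C(n,2)} · (x ⊕_{u,v} y)_{s,t}^{(n)}. -/
import Mathlib


variable {K : Type*} [Field K]

def genFib (s t : K) : ℕ → K
  | 0 => 0
  | 1 => 1
  | n + 2 => s * genFib s t (n + 1) + t * genFib s t n

def fibtorial (s t : K) (n : ℕ) : K := ∏ j ∈ Finset.range n, genFib s t (j + 1)

def fibonomial (s t : K) (n k : ℕ) : K :=
  fibtorial s t n / (fibtorial s t k * fibtorial s t (n - k))

/-- The (u,v)-deformed (s,t)-binomial power (x ⊕_{u,v} y)_{s,t}^{(n)}. -/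
def defPow (s t u v x y : K) (n : ℕ) : K :=
  ∑ k ∈ Finset.range (n + 1),
    fibonomial s t n k * u ^ Nat.choose (n - k) 2 * v ^ Nat.choose k 2 *
      x ^ (n - k) * y ^ k

lemma genFib_scale (s t a : K) : ∀ m, genFib (a * s) (a ^ 2 * t) m = a ^ (m - 1) * genFib s t m
  | 0 => by simp [genFib]
  | 1 => by simp [genFib]
  | (m + 2) => by
    rw [genFib, genFib, genFib_scale s t a (m + 1), genFib_scale s t a m,
      show m + 2 - 1 = m + 1 from rfl, show m + 1 - 1 = m from rfl]
    cases m with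
    | zero => simp [genFib]
    | succ k => rw [show k + 1 - 1 = k from rfl]; ring

lemma fibtorial_scale (s t a : K) (n : ℕ) :
    fibtorial (a * s) (a ^ 2 * t) n = a ^ Nat.choose n 2 * fibtorial s t n := by
  induction n with
  | zero => simp [fibtorial]
  | succ n ih =>
    rw [fibtorial, fibtorial, Finset.prod_range_succ, Finset.prod_range_succ,
      ← fibtorial, ← fibtorial, ih, genFib_scale, show n + 1 - 1 = n from rfl,
      Nat.choose_succ_succ, Nat.choose_one_right, pow_add]
    ring

lemma fibtorial_ne_zero (s t : K) (n m : ℕ) (hmn : m ≤ n)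
    (hnz : ∀ k, 1 ≤ k → k ≤ n → genFib s t k ≠ 0) : fibtorial s t m ≠ 0 := by
  rw [fibtorial]
  apply Finset.prod_ne_zero_iff.2
  intro j hj
  exact hnz (j + 1) (by omega) (by have := Finset.mem_range.1 hj; omega)

theorem defPow_rescale (s t u v a x y : K) (hs : s ≠ 0) (ht : t ≠ 0) (ha : a ≠ 0)
    (n : ℕ) (hnz : ∀ m, 1 ≤ m → m ≤ n → genFib s t m ≠ 0) :
    defPow (a * s) (a ^ 2 * t) (a * u) (a * v) x y n =
      a ^ Nat.choose n 2 * defPow s t u v x y n := by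
  unfold defPow
  rw [Finset.mul_sum]
  apply Finset.sum_congr rfl
  intro k hk
  have hkn : k ≤ n := by have := Finset.mem_range.1 hk; omega
  have hFk := fibtorial_ne_zero s t n k hkn hnz
  have hFnk := fibtorial_ne_zero s t n (n - k) (by omega) hnz
  rw [fibonomial, fibonomial, fibtorial_scale, fibtorial_scale, fibtorial_scale,
    mul_pow, mul_pow]
  field_simp
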